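/- Let r ≥ 2 and m ≥ 0 be integers. There exists a Laurent polynomial P(t) = Σ_{j ∈ ℤ} a_j t^j with complex coefficients (only finitely many a_j nonzero) such that for every β ∈ ℂ with ⦃β+k⦄ ≠ 0 for all k ∈ H_r, one has Σ_{k ∈ H_r} (⦃rβ⦄/⦃β+k⦄)^m = Σ_j a_j (q^{β})^j. (This is the paper's remark that the Verlinde formula, though not apparently so, yields a Laurent polynomial in q^{β}.) -/

import Mathlib

/-- `q^x = exp(π i x / r)`. -/
noncomputable def qc (r : ℕ) (x : ℂ) : ℂ := Complex.exp (Real.pi * Complex.I * x / r)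

/-- `⦃x⦄ = q^x - q^{-x}`. -/
noncomputable def br (r : ℕ) (x : ℂ) : ℂ := qc r x - qc r (-x)

/-- `H_r = {1-r, 3-r, …, r-1}`, the `r` integers `2j - (r-1)` for `j = 0, …, r-1`. -/
def Hr (r : ℕ) : Finset ℤ := (Finset.range r).image (fun j : ℕ => 2 * (j : ℤ) - ((r : ℤ) - 1))

/-!
Put `z = q^β` and `y = q^{β+k} = z q^k`. Since `(q^k)^{2r} = 1` we have `y^{2r} = z^{2r}`, so
`⦃rβ⦄ = z^{-r} (y^{2r} - 1)` while `⦃β+k⦄ = y^{-1} (y^2 - 1)`; the quotient is the geometric sum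
`z^{-r} y Σ_{j<r} y^{2j}`, a Laurent polynomial in `z` whose coefficients do not depend on `β`.
-/

open LaurentPolynomial

theorem LaurentPolynomial.eval₂_eq_sum_coeff {R S : Type*} [CommSemiring R] [CommSemiring S]
    (f : R →+* S) (x : Sˣ) (p : R[T;T⁻¹]) :
    eval₂ f x p = ∑ n ∈ p.coeff.support, f (p.coeff n) * ↑(x ^ n) := by
  conv_lhs => rw [← AddMonoidAlgebra.sum_coeff_single p]
  simp only [Finsupp.sum, map_sum, single_eq_C_mul_T, eval₂_C_mul_T]

theorem sub_inv_div_sub_inv_eq_geom_sum {K : Type*} [Field K] {z y : K} {r : ℕ}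
    (hz : z ≠ 0) (hzy : y ^ (2 * r) = z ^ (2 * r)) (hy : y - y⁻¹ ≠ 0) :
    (z ^ r - (z ^ r)⁻¹) / (y - y⁻¹) = (z ^ r)⁻¹ * y * ∑ j ∈ Finset.range r, y ^ (2 * j) := by
  have hy0 : y ≠ 0 := by rintro rfl; simp at hy
  have hgeom := geom_sum_mul (y ^ 2) r
  simp only [← pow_mul, hzy] at hgeom
  rw [div_eq_iff hy]
  calc z ^ r - (z ^ r)⁻¹ = (z ^ r)⁻¹ * (z ^ (2 * r) - 1) := by field_simp; ring
    _ = (z ^ r)⁻¹ * ((∑ j ∈ Finset.range r, y ^ (2 * j)) * (y ^ 2 - 1)) := by rw [hgeom]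
    _ = _ := by field_simp

theorem qc_ne_zero (r : ℕ) (x : ℂ) : qc r x ≠ 0 := Complex.exp_ne_zero _

theorem qc_add (r : ℕ) (x y : ℂ) : qc r (x + y) = qc r x * qc r y := by
  rw [qc, qc, qc, ← Complex.exp_add]; ring_nf

theorem qc_neg (r : ℕ) (x : ℂ) : qc r (-x) = (qc r x)⁻¹ := by
  rw [qc, qc, ← Complex.exp_neg]; ring_nf

theorem qc_natCast_mul (r n : ℕ) (x : ℂ) : qc r (n * x) = qc r x ^ n := by
  rw [qc, qc, ← Complex.exp_nat_mul]; ring_nf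

theorem qc_intCast_pow_two_mul (r : ℕ) (k : ℤ) : qc r k ^ (2 * r) = 1 := by
  rcases Nat.eq_zero_or_pos r with rfl | hr
  · simp
  have hr0 : (r : ℂ) ≠ 0 := Nat.cast_ne_zero.mpr hr.ne'
  rw [← qc_natCast_mul, qc]
  convert Complex.exp_int_mul_two_pi_mul_I k using 2
  field_simp
  push_cast
  ring

theorem br_eq_sub_inv (r : ℕ) (x : ℂ) : br r x = qc r x - (qc r x)⁻¹ := by
  rw [br, qc_neg]

noncomputable def verlindeRatio (r : ℕ) (k : ℤ) : ℂ[T;T⁻¹] :=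
  ∑ j ∈ Finset.range r, C (qc r k ^ (2 * j + 1)) * T (2 * j + 1 - r)

theorem eval₂_verlindeRatio {r : ℕ} {k : ℤ} {β : ℂ} (h : br r (β + k) ≠ 0) :
    eval₂ (RingHom.id ℂ) (Units.mk0 (qc r β) (qc_ne_zero r β)) (verlindeRatio r k)
      = br r (r * β) / br r (β + k) := by
  have hz := qc_ne_zero r β
  have hzw : (qc r β * qc r k) ^ (2 * r) = qc r β ^ (2 * r) := by
    rw [mul_pow, qc_intCast_pow_two_mul, mul_one]
  rw [br_eq_sub_inv, qc_add] at h
  rw [br_eq_sub_inv, br_eq_sub_inv, qc_add, qc_natCast_mul,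
    sub_inv_div_sub_inv_eq_geom_sum hz hzw h, verlindeRatio, map_sum, Finset.mul_sum]
  refine Finset.sum_congr rfl fun j _ => ?_
  rw [eval₂_C_mul_T, Units.val_zpow_eq_zpow_val, Units.val_mk0, RingHom.id_apply,
    zpow_sub₀ hz]
  norm_cast
  field_simp
  ring

theorem statement6_general (r : ℕ) (m : ℕ) :
    ∃ (s : Finset ℤ) (a : ℤ → ℂ),
      ∀ β : ℂ, (∀ k ∈ Hr r, br r (β + (k : ℂ)) ≠ 0) →
        ∑ k ∈ Hr r, (br r ((r : ℂ) * β) / br r (β + (k : ℂ))) ^ m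
          = ∑ j ∈ s, a j * (qc r β) ^ j := by
  set P : ℂ[T;T⁻¹] := ∑ k ∈ Hr r, verlindeRatio r k ^ m
  refine ⟨P.coeff.support, P.coeff, fun β hβ => ?_⟩
  have hP := eval₂_eq_sum_coeff (RingHom.id ℂ) (Units.mk0 (qc r β) (qc_ne_zero r β)) P
  simp only [P, map_sum, map_pow] at hP
  rw [Finset.sum_congr rfl fun k hk => by rw [eval₂_verlindeRatio (hβ k hk)]] at hP
  simpa only [RingHom.id_apply, Units.val_zpow_eq_zpow_val, Units.val_mk0] using hP

/-- there is a Laurent polynomial `P(t) = Σ_{j} a_j t^j` such that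
whenever `⦃β+k⦄ ≠ 0` for all `k ∈ H_r`,
`Σ_{k ∈ H_r} (⦃rβ⦄/⦃β+k⦄)^m = Σ_j a_j (q^β)^j`. -/
theorem statement6 (r : ℕ) (hr : 2 ≤ r) (m : ℕ) :
    ∃ (s : Finset ℤ) (a : ℤ → ℂ),
      ∀ β : ℂ, (∀ k ∈ Hr r, br r (β + (k : ℂ)) ≠ 0) →
        ∑ k ∈ Hr r, (br r ((r : ℂ) * β) / br r (β + (k : ℂ))) ^ m
          = ∑ j ∈ s, a j * (qc r β) ^ j :=
  statement6_general r m
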